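/- For all integers d ≥ 1 and 0 ≤ ℓ < d, the following identity of formal power series holds: (1−x)^{d+1} · ∑_{t≥1} (2t)^ℓ (2t−1)^{d−ℓ} x^t = x · I_d(A_{d,ℓ}^{(2)}). (Lemma 4.6: here (2t)^ℓ(2t−1)^{d−ℓ} is the number of lattice points of the t-th dilate of the half-open cube [−1,1]^d with the ℓ facets x_d = 1, …, x_{d+1−ℓ} = 1 among its closed facets removed together with all remaining facets removed; the identity expresses h*([−1,1]^d_{2d−ℓ}; x) = I_{d+1} h*([−1,1]^d_ℓ; x) = x·I_d A_{d,ℓ}^{(2)}.) -/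

import Mathlib

/-
This is Stanley reciprocity for `P(t) = (2t)^ℓ (2t+1)^(d-ℓ)`, a polynomial of degree `≤ d` with
`(-1)^d P(-t) = (2t)^ℓ (2t-1)^(d-ℓ)`. Write `N = d + 1` and `wⱼ = (-1)ʲ C(N, j)` for the
coefficients of `(1 - x)ᴺ`. As `deg P < N`, the finite difference `∑ⱼ wⱼ P(y - j)` vanishes
identically. The coefficients of `h = (1 - x)ᴺ ∑_{t ≥ 0} P(t) xᵗ` are the truncated sums
`c_m = ∑_{j ≤ m} wⱼ P(m - j)`, so `c_m = 0` for `m ≥ N` and for `m < 0`. The `n`-th coefficient of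
`(1 - x)ᴺ ∑_{t ≥ 1} P(-t) xᵗ` collects the terms `j < n` of a vanishing finite difference, hence
equals minus its terms `j ≥ n`; the reflection `j ↦ N - j`, under which `w_{N-j} = (-1)ᴺ wⱼ`,
turns these into `(-1)^d c_{N-n}`, the `n`-th coefficient of `(-1)^d x · x^d h(1/x)`.
-/

open Polynomial PowerSeries

/-- `A` is the `r`-colored `ℓ`-Eulerian polynomial `A_{d,ℓ}^{(r)}`, i.e. the polynomial
satisfying the formal power series identity
`A = (1 - x)^{d+1} * ∑_{t ≥ 0} (r t)^ℓ (r t + 1)^{d - ℓ} x^t`. -/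
def IsColoredEulerian (d r ℓ : ℕ) (A : Polynomial ℝ) : Prop :=
  (A : PowerSeries ℝ) =
    (1 - PowerSeries.X) ^ (d + 1) *
      PowerSeries.mk fun t : ℕ => ((r : ℝ) * t) ^ ℓ * ((r : ℝ) * t + 1) ^ (d - ℓ)

open Finset

section

variable {R : Type*} [CommRing R]

theorem neg_one_pow_sub_eq_mul {N j : ℕ} (h : j ≤ N) :
    (-1 : R) ^ (N - j) = (-1) ^ N * (-1) ^ j := by
  rw [← pow_add, show N + j = N - j + 2 * j by omega, pow_add, pow_mul, neg_one_sq, one_pow,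
    mul_one]

theorem sum_range_alternating_choose_reflect (N : ℕ) (f : ℕ → R) :
    ∑ j ∈ range (N + 1), (-1) ^ j * N.choose j * f j =
      (-1) ^ N * ∑ j ∈ range (N + 1), (-1) ^ j * N.choose j * f (N - j) := by
  rw [← sum_range_reflect, mul_sum]
  refine sum_congr rfl fun j hj => ?_
  have hj : j ≤ N := Nat.lt_succ_iff.mp (mem_range.mp hj)
  rw [Nat.add_sub_cancel, Nat.choose_symm hj, neg_one_pow_sub_eq_mul hj]
  ring

theorem Polynomial.sum_range_alternating_choose_mul_eval_sub {P : R[X]} {N : ℕ}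
    (hP : P.natDegree < N) (y : R) :
    ∑ j ∈ range (N + 1), (-1) ^ j * N.choose j * P.eval (y - j) = 0 := by
  have hdiff := congr_fun (fwdDiff_iter_eq_zero_of_degree_lt hP) (y - N)
  rw [fwdDiff_iter_eq_sum_shift, ← sum_range_reflect, Pi.zero_apply] at hdiff
  rw [← hdiff]
  refine sum_congr rfl fun j hj => ?_
  have hj : j ≤ N := Nat.lt_succ_iff.mp (mem_range.mp hj)
  rw [Nat.add_sub_cancel, Nat.sub_sub_self hj, Nat.choose_symm hj, nsmul_one, Nat.cast_sub hj,
    sub_add_sub_cancel, zsmul_eq_mul]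
  push_cast
  ring

theorem Polynomial.sum_range_alternating_choose_mul_eval_add {P : R[X]} {N : ℕ}
    (hP : P.natDegree < N) (y : R) :
    ∑ j ∈ range (N + 1), (-1) ^ j * N.choose j * P.eval (y + j) = 0 := by
  have hdeg : (P.comp (-Polynomial.X)).natDegree < N :=
    (natDegree_comp_le.trans (by
      rw [natDegree_neg]; exact mul_le_of_le_one_right (Nat.zero_le _) natDegree_X_le)).trans_lt hP
  simpa [sub_eq_neg_add] using sum_range_alternating_choose_mul_eval_sub hdeg (-y)

theorem PowerSeries.one_sub_X_pow_eq_sum (N : ℕ) :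
    (1 - PowerSeries.X : R⟦X⟧) ^ N =
      ∑ j ∈ range (N + 1), PowerSeries.C ((-1) ^ j * N.choose j : R) * PowerSeries.X ^ j := by
  rw [sub_eq_neg_add, add_pow]
  refine sum_congr rfl fun j _ => ?_
  rw [one_pow, mul_one, neg_pow, map_mul, map_pow, map_neg, map_one, map_natCast]
  ring

theorem PowerSeries.coeff_one_sub_X_pow_mul_mk (N n : ℕ) (f : ℕ → R) :
    PowerSeries.coeff n ((1 - PowerSeries.X : R⟦X⟧) ^ N * PowerSeries.mk f) =
      ∑ j ∈ range (N + 1), (-1) ^ j * N.choose j * if j ≤ n then f (n - j) else 0 := by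
  rw [one_sub_X_pow_eq_sum, sum_mul, map_sum]
  refine sum_congr rfl fun j _ => ?_
  rw [mul_assoc, coeff_C_mul, coeff_X_pow_mul', coeff_mk]

/-- The `m`-th coefficient of the numerator `h` in `∑ₜ P(t) xᵗ = h(x) / (1 - x)ᴺ`, given by the
same formula for every integer `m`. -/
def numeratorCoeff (N : ℕ) (P : R[X]) (m : ℤ) : R :=
  ∑ j ∈ range (N + 1), (-1) ^ j * N.choose j * if (j : ℤ) ≤ m then P.eval ((m - j : ℤ) : R) else 0

theorem coeff_one_sub_X_pow_mul_mk_eval (N m : ℕ) (P : R[X]) :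
    PowerSeries.coeff m ((1 - PowerSeries.X : R⟦X⟧) ^ N * PowerSeries.mk fun t => P.eval (t : R)) =
      numeratorCoeff N P m := by
  rw [coeff_one_sub_X_pow_mul_mk, numeratorCoeff]
  refine sum_congr rfl fun j _ => ?_
  simp only [Nat.cast_le]
  split_ifs with hj
  · push_cast [hj]; rfl
  · rfl

theorem numeratorCoeff_of_neg (N : ℕ) (P : R[X]) {m : ℤ} (hm : m < 0) :
    numeratorCoeff N P m = 0 :=
  sum_eq_zero fun j _ => by rw [if_neg (by omega), mul_zero]

theorem numeratorCoeff_of_le {N : ℕ} {P : R[X]} (hP : P.natDegree < N) {m : ℤ} (hm : N ≤ m) :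
    numeratorCoeff N P m = 0 := by
  rw [← sum_range_alternating_choose_mul_eval_sub hP (m : R), numeratorCoeff]
  refine sum_congr rfl fun j hj => ?_
  have hj : j ≤ N := Nat.lt_succ_iff.mp (mem_range.mp hj)
  rw [if_pos (by omega)]
  push_cast; rfl

theorem numeratorCoeff_sub (N n : ℕ) (P : R[X]) :
    numeratorCoeff N P ((N : ℤ) - n) = (-1) ^ N *
      ∑ j ∈ range (N + 1), (-1) ^ j * N.choose j *
        if n ≤ j then P.eval (((j : ℤ) - n : ℤ) : R) else 0 := by
  rw [numeratorCoeff, sum_range_alternating_choose_reflect]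
  congr 1
  refine sum_congr rfl fun j hj => ?_
  have hj : j ≤ N := Nat.lt_succ_iff.mp (mem_range.mp hj)
  by_cases hnj : n ≤ j
  · rw [if_pos (by omega), if_pos hnj, Nat.cast_sub hj]
    ring_nf
  · rw [if_neg (by omega), if_neg hnj]

theorem coeff_one_sub_X_pow_mul_mk_eval_neg {d : ℕ} {P : R[X]} (hP : P.natDegree ≤ d) (n : ℕ) :
    PowerSeries.coeff n ((1 - PowerSeries.X : R⟦X⟧) ^ (d + 1) *
        PowerSeries.mk fun t => if t = 0 then 0 else (-1) ^ d * P.eval (-t : R)) =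
      numeratorCoeff (d + 1) P ((d + 1 : ℕ) - n) := by
  have hlow : PowerSeries.coeff n ((1 - PowerSeries.X : R⟦X⟧) ^ (d + 1) *
        PowerSeries.mk fun t => if t = 0 then 0 else (-1) ^ d * P.eval (-t : R)) =
      (-1) ^ d * ∑ j ∈ range (d + 2), (-1) ^ j * (d + 1).choose j *
        if j < n then P.eval (((j : ℤ) - n : ℤ) : R) else 0 := by
    rw [coeff_one_sub_X_pow_mul_mk, mul_sum]
    refine sum_congr rfl fun j _ => ?_
    by_cases hjn : j < n
    · rw [if_pos hjn.le, if_neg (by omega), if_pos hjn, Nat.cast_sub hjn.le]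
      push_cast; ring_nf
    · by_cases hj : j ≤ n
      · rw [if_pos hj, if_pos (by omega), if_neg hjn]; simp
      · rw [if_neg hj, if_neg hjn]; simp
  have hsplit : ((∑ j ∈ range (d + 2), (-1) ^ j * (d + 1).choose j *
        if j < n then P.eval (((j : ℤ) - n : ℤ) : R) else 0) +
      ∑ j ∈ range (d + 2), (-1) ^ j * (d + 1).choose j *
        if n ≤ j then P.eval (((j : ℤ) - n : ℤ) : R) else 0) = 0 := by
    rw [← sum_add_distrib]
    refine (sum_congr rfl fun j _ => ?_).trans
      (sum_range_alternating_choose_mul_eval_add (Nat.lt_add_one_of_le hP) (-n : R))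
    split_ifs <;> first | omega | (push_cast; ring_nf)
  rw [hlow, numeratorCoeff_sub]
  linear_combination (-1 : R) ^ d * hsplit

theorem one_sub_X_pow_mul_mk_eval_neg_eq_X_mul_reflect {d : ℕ} {P A : R[X]} (hP : P.natDegree ≤ d)
    (hA : (A : R⟦X⟧) = (1 - PowerSeries.X) ^ (d + 1) * PowerSeries.mk fun t => P.eval (t : R)) :
    (1 - PowerSeries.X : R⟦X⟧) ^ (d + 1) *
        PowerSeries.mk (fun t => if t = 0 then 0 else (-1) ^ d * P.eval (-t : R)) =
      ((Polynomial.X * A.reflect d : R[X]) : R⟦X⟧) := by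
  have hP' : P.natDegree < d + 1 := Nat.lt_add_one_of_le hP
  have hAcoeff (m : ℕ) : A.coeff m = numeratorCoeff (d + 1) P m := by
    rw [← Polynomial.coeff_coe, hA, coeff_one_sub_X_pow_mul_mk_eval]
  ext n
  rw [coeff_one_sub_X_pow_mul_mk_eval_neg hP, Polynomial.coeff_coe]
  rcases n with _ | k
  · simp [numeratorCoeff_of_le hP']
  · rw [Polynomial.coeff_X_mul, Polynomial.coeff_reflect]
    rcases le_or_gt k d with hk | hk
    · rw [revAt_le hk, hAcoeff]
      congr 1
      omega
    · rw [revAt_eq_self_of_lt hk, hAcoeff, numeratorCoeff_of_le hP' (m := k) (by omega),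
        numeratorCoeff_of_neg _ _ (by omega)]

end

theorem h_star_reciprocal_halfopen_cube_general (d ℓ : ℕ) (hℓ : ℓ < d)
    (A : Polynomial ℝ) (hA : IsColoredEulerian d 2 ℓ A) :
    ((1 - PowerSeries.X : PowerSeries ℝ) ^ (d + 1) *
        PowerSeries.mk fun t : ℕ =>
          if t = 0 then 0 else (2 * (t : ℝ)) ^ ℓ * (2 * (t : ℝ) - 1) ^ (d - ℓ)) =
      ((Polynomial.X * Polynomial.reflect d A : Polynomial ℝ) : PowerSeries ℝ) := by
  set P : ℝ[X] :=
    (Polynomial.C 2 * Polynomial.X) ^ ℓ * (Polynomial.C 2 * Polynomial.X + 1) ^ (d - ℓ)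
  have hP : P.natDegree ≤ d := by
    simp only [P]
    compute_degree
    omega
  have hA' : (A : ℝ⟦X⟧) =
      (1 - PowerSeries.X) ^ (d + 1) * PowerSeries.mk fun t => P.eval (t : ℝ) := by
    simpa [P, IsColoredEulerian] using hA
  rw [← one_sub_X_pow_mul_mk_eval_neg_eq_X_mul_reflect hP hA']
  have hsign : (-1 : ℝ) ^ d = (-1) ^ ℓ * (-1) ^ (d - ℓ) := by
    rw [← pow_add, Nat.add_sub_cancel' hℓ.le]
  congr 2 with t
  split_ifs
  · rfl
  · simp only [P, eval_mul, eval_pow, eval_add, eval_C, eval_X, eval_one, hsign]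
    rw [mul_mul_mul_comm, ← mul_pow, ← mul_pow]
    ring

/-- Lemma 4.6: for `d ≥ 1` and `0 ≤ ℓ < d`, the identity of formal power series
`(1-x)^{d+1} ∑_{t ≥ 1} (2t)^ℓ (2t-1)^{d-ℓ} x^t = x · I_d(A_{d,ℓ}^{(2)})` holds, where
`I_d(p) = x^d p(1/x)` is formalized as `Polynomial.reflect d`. -/
theorem h_star_reciprocal_halfopen_cube (d ℓ : ℕ) (hd : 1 ≤ d) (hℓ : ℓ < d)
    (A : Polynomial ℝ) (hA : IsColoredEulerian d 2 ℓ A) :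
    ((1 - PowerSeries.X : PowerSeries ℝ) ^ (d + 1) *
        PowerSeries.mk fun t : ℕ =>
          if t = 0 then 0 else (2 * (t : ℝ)) ^ ℓ * (2 * (t : ℝ) - 1) ^ (d - ℓ)) =
      ((Polynomial.X * Polynomial.reflect d A : Polynomial ℝ) : PowerSeries ℝ) :=
  h_star_reciprocal_halfopen_cube_general d ℓ hℓ A hA
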